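/- (Translation of autocorrelation risk to excess variance: risk decomposition identity.) Let T ≥ 2, ε ∈ (0,1), μ̄ ∈ ℝ, v ≥ 0, and ρ̄ ∈ ℝ with 1 + (T−1)ρ̄ ≥ 0. Set v̂ = (1 + (T−1)ρ̄)·v. Then the closed-form worst-case growth rate satisfies the identity −(1/2)·( 1 − ( 1 − μ̄ + sqrt( ((1−ε)(1 + (T−1)ρ̄)) / (εT) )·sqrt(v) )² − ((T−1)(1−ρ̄)/(εT))·v ) = v/(2ε) − (1/2)·( 1 − ( 1 − μ̄ + sqrt( (1−ε)/(εT) )·sqrt(v̂) )² + v̂/(εT) ). In particular, the total risk −G_ε(w) decomposes into a persistent risk term v/(2ε) that is independent of ρ̄ and a compounding risk term that depends on the autocorrelations only through the modified variance v̂ = (1 + (T−1)ρ̄)·v. -/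

import Mathlib

/-!
The two square-root terms agree, since `√((1-ε)ρ'/(εT)) · √v = √((1-ε)/(εT)) · √(ρ' v)` with
`ρ' = 1 + (T-1)ρ̄`. What remains is linear in `v`: the two variance penalties differ by
`((T-1)(1-ρ̄) + ρ') v / (εT) = v / ε`, which is the persistent risk.
-/

theorem Real.sqrt_mul_div_mul_sqrt {a b c v : ℝ} (hac : 0 ≤ a / c) (hv : 0 ≤ v) :
    √(a * b / c) * √v = √(a / c) * √(b * v) := by
  rw [← Real.sqrt_mul' _ hv, ← Real.sqrt_mul hac]
  ring_nf

theorem neg_half_penalized_eq_sub_half_penalized {T : ℝ} (hT : T ≠ 0) (ε x ρ v : ℝ) :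
    -((1 / 2) * (1 - x ^ 2 - ((T - 1) * (1 - ρ) / (ε * T)) * v)) =
      v / (2 * ε) - (1 / 2) * (1 - x ^ 2 + ((1 + (T - 1) * ρ) * v) / (ε * T)) := by
  field_simp
  ring

theorem risk_decomposition (T : ℕ) (hT : 2 ≤ T) (ε : ℝ) (hε : ε ∈ Set.Ioo (0 : ℝ) 1)
    (μbar v ρbar : ℝ) (hv : 0 ≤ v) :
    -((1 / 2) * (1 -
        (1 - μbar +
          Real.sqrt ((1 - ε) * (1 + ((T : ℝ) - 1) * ρbar) / (ε * T)) *
            Real.sqrt v) ^ 2 -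
        (((T : ℝ) - 1) * (1 - ρbar) / (ε * T)) * v)) =
      v / (2 * ε) -
        (1 / 2) * (1 -
          (1 - μbar +
            Real.sqrt ((1 - ε) / (ε * T)) *
              Real.sqrt ((1 + ((T : ℝ) - 1) * ρbar) * v)) ^ 2 +
          ((1 + ((T : ℝ) - 1) * ρbar) * v) / (ε * T)) := by
  obtain ⟨hε0, hε1⟩ := hε
  have hT0 : (T : ℝ) ≠ 0 := by positivity
  have hscale : 0 ≤ (1 - ε) / (ε * T) := div_nonneg (by linarith) (by positivity)
  rw [Real.sqrt_mul_div_mul_sqrt hscale hv]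
  exact neg_half_penalized_eq_sub_half_penalized hT0 ..
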